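/- arXiv:2012.05468 — 3 statements merged into one kernel-verified Lean document; each statement's English description precedes it below -/
import Mathlib

section
/- The 3×3 symmetric matrix Q = [[−1, 1/2, 0],[1/2, −k_D, 1/2],[0, 1/2, −1/τ]] with τ > 0 is negative definite if and only if k_D > (1 + τ)/4. -/
/-!
Completing the square in `x₀` and then in `x₂` gives
`xᵀ Q x = -(x₀ - x₁/2)² - (x₂ - τ x₁/2)²/τ - (k_D - (1 + τ)/4) x₁²`.
For `τ > 0` the first two terms are nonpositive, so the form is negative definite exactly when the
coefficient of `x₁²` is negative; the vector `(1/2, 1, τ/2)`, which kills both squares, shows that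
this is also necessary.
-/

open Matrix

lemma dotProduct_Q3_mulVec (kD τ : ℝ) (hτ : τ ≠ 0) (x : Fin 3 → ℝ) :
    x ⬝ᵥ (!![-1, 1/2, 0; 1/2, -kD, 1/2; 0, 1/2, -1/τ] : Matrix (Fin 3) (Fin 3) ℝ).mulVec x =
      -(x 0 - x 1 / 2) ^ 2 - (x 2 - τ * x 1 / 2) ^ 2 / τ - (kD - (1 + τ) / 4) * x 1 ^ 2 := by
  simp [mulVec, dotProduct, Fin.sum_univ_succ]
  field_simp
  ring

lemma neg_sq_sub_sq_div_sub_mul_sq_neg {u v w τ d : ℝ} (hτ : 0 < τ) (hd : 0 < d)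
    (h : u ≠ 0 ∨ v ≠ 0 ∨ w ≠ 0) : -u ^ 2 - v ^ 2 / τ - d * w ^ 2 < 0 := by
  have hu : 0 ≤ u ^ 2 := sq_nonneg u
  have hv : 0 ≤ v ^ 2 / τ := by positivity
  have hw : 0 ≤ d * w ^ 2 := by positivity
  rcases h with hu' | hv' | hw'
  · linarith [sq_pos_of_ne_zero hu']
  · linarith [div_pos (sq_pos_of_ne_zero hv') hτ]
  · linarith [mul_pos hd (sq_pos_of_ne_zero hw')]

theorem Q3_negdef_iff (kD τ : ℝ) (hτ : 0 < τ) :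
    (∀ x : Fin 3 → ℝ, x ≠ 0 →
      x ⬝ᵥ (!![-1, 1/2, 0; 1/2, -kD, 1/2; 0, 1/2, -1/τ] : Matrix (Fin 3) (Fin 3) ℝ).mulVec x < 0)
      ↔ kD > (1 + τ) / 4 := by
  simp only [dotProduct_Q3_mulVec kD τ hτ.ne']
  constructor
  · intro h
    have := h ![1/2, 1, τ/2] (fun h0 => by simpa using congrFun h0 1)
    simp only [cons_val] at this
    norm_num at this
    linarith
  · intro hk x hx
    apply neg_sq_sub_sq_div_sub_mul_sq_neg hτ (sub_pos.2 hk)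
    by_contra! h0
    obtain ⟨h0, h2, h1⟩ := h0
    rw [h1] at h0 h2
    refine hx (funext fun i => ?_)
    fin_cases i <;> simp <;> linarith
end

section
/- Let V(Γ, ω_e) = k_P(1 − Γ_dᵀΓ) + ½‖ω_e‖² along solutions of the closed-loop system Γ̇ = (Ω_d + Ω_e) × Γ, ω̇_e = (A_skw − k_D I)ω_e, where Ω_d = k_P(Γ × Γ_d), ω_d, ω_e are the planar components with ‖Ω_d‖ = ‖ω_d‖ and Ω_e = R E₂ᵀ ω_e. Then V̇ ≤ −‖ω_d‖² + ‖ω_d‖‖ω_e‖ − k_D‖ω_e‖², and if k_D > 1/4 this upper bound is negative whenever (ω_d, ω_e) ≠ (0,0). -/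
/-!
By the triple product, the attitude term of `V̇` is `-(Ω_d + Ω_e) ⬝ Ω_d`. Since `Ω_d ⊥ Γ = R e₃`,
the body-frame vector `Rᵀ Ω_d` has no third component, so `‖Ω_d‖ = ‖ω_d‖`, while
`Ω_e ⬝ Ω_d = ω_e ⬝ ω_d` by adjointness; the skew part of the velocity dynamics does not
contribute, leaving `V̇ = -‖ω_d‖² - ω_e ⬝ ω_d - k_D ‖ω_e‖²`. Cauchy–Schwarz gives the bound, and
`-a² + ab - k_D b² = -(a - b/2)² - (k_D - 1/4) b²` its negativity.
-/

open Matrix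

lemma neg_sq_add_mul_sub_mul_sq_lt_zero {a b c : ℝ} (hc : 1 / 4 < c) (hab : ¬(a = 0 ∧ b = 0)) :
    -a ^ 2 + a * b - c * b ^ 2 < 0 := by
  by_cases hb : b = 0
  · have ha : a ≠ 0 := fun ha => hab ⟨ha, hb⟩
    subst hb
    nlinarith [sq_pos_of_ne_zero ha]
  · nlinarith [sq_nonneg (a - b / 2), sq_pos_of_ne_zero hb]

section DotProduct

variable {m n : Type*} [Fintype m] [Fintype n]

lemma dotProduct_self_nonneg (v : n → ℝ) : 0 ≤ v ⬝ᵥ v :=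
  Finset.sum_nonneg fun i _ => mul_self_nonneg (v i)

lemma sqrt_dotProduct_self_eq_zero {v : n → ℝ} : √(v ⬝ᵥ v) = 0 ↔ v = 0 := by
  rw [Real.sqrt_eq_zero (dotProduct_self_nonneg v), dotProduct_self_eq_zero]

lemma neg_dotProduct_le_sqrt_mul_sqrt (x y : n → ℝ) : -(y ⬝ᵥ x) ≤ √(x ⬝ᵥ x) * √(y ⬝ᵥ y) := by
  have h := Real.sum_mul_le_sqrt_mul_sqrt Finset.univ (-x) y
  simp only [Pi.neg_apply, neg_mul, Finset.sum_neg_distrib, neg_sq] at h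
  rw [dotProduct_comm]
  simpa only [dotProduct, sq] using h

lemma mulVec_dotProduct_eq_dotProduct_transpose_mulVec (A : Matrix m n ℝ) (x : n → ℝ)
    (y : m → ℝ) : A *ᵥ x ⬝ᵥ y = x ⬝ᵥ Aᵀ *ᵥ y := by
  rw [dotProduct_transpose_mulVec, dotProduct_comm]

lemma transpose_mulVec_dotProduct_self [DecidableEq n] {R : Matrix n n ℝ} (hR : R * Rᵀ = 1)
    (x : n → ℝ) :
    Rᵀ *ᵥ x ⬝ᵥ Rᵀ *ᵥ x = x ⬝ᵥ x := by
  rw [mulVec_dotProduct_eq_dotProduct_transpose_mulVec, transpose_transpose, mulVec_mulVec, hR,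
    one_mulVec]

lemma dotProduct_mulVec_self_eq_zero_of_transpose_eq_neg {A : Matrix n n ℝ} (hA : Aᵀ = -A)
    (v : n → ℝ) : v ⬝ᵥ A *ᵥ v = 0 := by
  have h := dotProduct_transpose_mulVec A v v
  rw [hA, neg_mulVec, dotProduct_neg] at h
  linarith

lemma HasDerivAt.dotProduct {u v : ℝ → n → ℝ} {u' v' : n → ℝ} {t : ℝ}
    (hu : HasDerivAt u u' t) (hv : HasDerivAt v v' t) :
    HasDerivAt (fun s => u s ⬝ᵥ v s) (u' ⬝ᵥ v t + u t ⬝ᵥ v') t := by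
  have h := HasDerivAt.fun_sum (u := Finset.univ) fun i _ =>
    (hasDerivAt_pi.1 hu i).mul (hasDerivAt_pi.1 hv i)
  rw [Finset.sum_add_distrib] at h
  exact h

lemma neg_dotProduct_self_add_sqrt_mul_sqrt_lt_zero {c : ℝ} (hc : 1 / 4 < c) {x y : n → ℝ}
    (hxy : ¬(x = 0 ∧ y = 0)) :
    -(x ⬝ᵥ x) + √(x ⬝ᵥ x) * √(y ⬝ᵥ y) - c * (y ⬝ᵥ y) < 0 := by
  have h := neg_sq_add_mul_sub_mul_sq_lt_zero hc (a := √(x ⬝ᵥ x)) (b := √(y ⬝ᵥ y))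
    (by rwa [sqrt_dotProduct_self_eq_zero, sqrt_dotProduct_self_eq_zero])
  rwa [Real.sq_sqrt (dotProduct_self_nonneg x), Real.sq_sqrt (dotProduct_self_nonneg y)] at h

end DotProduct

lemma dotProduct_damped_rotation_mulVec_self (k c : ℝ) (v : Fin 2 → ℝ) :
    v ⬝ᵥ (!![0, -k; k, 0] - c • (1 : Matrix (Fin 2) (Fin 2) ℝ)) *ᵥ v = -c * (v ⬝ᵥ v) := by
  have hskew : (!![0, -k; k, 0] : Matrix (Fin 2) (Fin 2) ℝ)ᵀ = -!![0, -k; k, 0] := by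
    ext i j; fin_cases i <;> fin_cases j <;> simp
  rw [sub_mulVec, dotProduct_sub, dotProduct_mulVec_self_eq_zero_of_transpose_eq_neg hskew,
    smul_mulVec, one_mulVec, dotProduct_smul, smul_eq_mul]
  ring

lemma transpose_mulVec_apply_two (R : Matrix (Fin 3) (Fin 3) ℝ) (w : Fin 3 → ℝ) :
    (Rᵀ *ᵥ w) 2 = R *ᵥ ![0, 0, 1] ⬝ᵥ w := by
  rw [mulVec_dotProduct_eq_dotProduct_transpose_mulVec]
  simp [dotProduct, Fin.sum_univ_three]

lemma dotProduct_self_planar_mulVec {u : Fin 3 → ℝ} (hu : u 2 = 0) :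
    (!![1, 0, 0; 0, 1, 0] : Matrix (Fin 2) (Fin 3) ℝ) *ᵥ u ⬝ᵥ !![1, 0, 0; 0, 1, 0] *ᵥ u
      = u ⬝ᵥ u := by
  simp [dotProduct, Fin.sum_univ_three, hu]

lemma hasDerivAt_attitude_lyapunov {n : Type*} [Fintype n] (kP : ℝ) (Γd : Fin 3 → ℝ)
    {Γ : ℝ → Fin 3 → ℝ} {ω : ℝ → n → ℝ} {W : Fin 3 → ℝ} {M : Matrix n n ℝ} {t : ℝ}
    (hΓ : HasDerivAt Γ (W ⨯₃ Γ t) t) (hω : HasDerivAt ω (M *ᵥ ω t) t) :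
    HasDerivAt (fun s => kP * (1 - Γd ⬝ᵥ Γ s) + (1/2) * (ω s ⬝ᵥ ω s))
      (-(W ⬝ᵥ kP • (Γ t ⨯₃ Γd)) + ω t ⬝ᵥ M *ᵥ ω t) t := by
  refine ((((hasDerivAt_const t Γd).dotProduct hΓ).const_sub 1 |>.const_mul kP).add
    ((hω.dotProduct hω).const_mul (1/2))).congr_deriv ?_
  rw [zero_dotProduct, zero_add, triple_product_permutation, dotProduct_smul, smul_eq_mul,
    dotProduct_comm (M *ᵥ ω t)]
  ring

theorem lyapunov_decrease_structure_preserving_general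
    (k kP kD : ℝ) (hkD : kD > 1/4)
    (Γd : Fin 3 → ℝ)
    (Γ : ℝ → Fin 3 → ℝ)
    (R : ℝ → Matrix (Fin 3) (Fin 3) ℝ)
    (hR : ∀ t, (R t)ᵀ * R t = 1 ∧ (R t).det = 1)
    (hΓR : ∀ t, Γ t = (R t).mulVec ![0, 0, 1])
    (ωe : ℝ → Fin 2 → ℝ)
    -- planar components and their lifts
    (E₂ : Matrix (Fin 2) (Fin 3) ℝ) (hE₂ : E₂ = !![1, 0, 0; 0, 1, 0])
    (Ωd : ℝ → Fin 3 → ℝ) (hΩd : ∀ t, Ωd t = kP • (Γ t ⨯₃ Γd))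
    (ωd : ℝ → Fin 2 → ℝ) (hωd : ∀ t, ωd t = E₂.mulVec ((R t)ᵀ.mulVec (Ωd t)))
    (Ωe : ℝ → Fin 3 → ℝ) (hΩe : ∀ t, Ωe t = (R t).mulVec (E₂ᵀ.mulVec (ωe t)))
    -- closed-loop dynamics
    (hΓdyn : ∀ t i, HasDerivAt (fun s => Γ s i) (((Ωd t + Ωe t) ⨯₃ Γ t) i) t)
    (hωedyn : ∀ t i, HasDerivAt (fun s => ωe s i)
      (((!![0, -k; k, 0] - kD • (1 : Matrix (Fin 2) (Fin 2) ℝ)).mulVec (ωe t)) i) t) :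
    ∀ t, ∃ v : ℝ,
      HasDerivAt (fun s => kP * (1 - Γd ⬝ᵥ Γ s) + (1/2) * (ωe s ⬝ᵥ ωe s)) v t ∧
      v ≤ -(ωd t ⬝ᵥ ωd t) + Real.sqrt (ωd t ⬝ᵥ ωd t) * Real.sqrt (ωe t ⬝ᵥ ωe t)
            - kD * (ωe t ⬝ᵥ ωe t) ∧
      (¬(ωd t = 0 ∧ ωe t = 0) →
        -(ωd t ⬝ᵥ ωd t) + Real.sqrt (ωd t ⬝ᵥ ωd t) * Real.sqrt (ωe t ⬝ᵥ ωe t)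
            - kD * (ωe t ⬝ᵥ ωe t) < 0) := by
  intro t
  have hΩd_perp : (R t *ᵥ ![0, 0, 1]) ⬝ᵥ Ωd t = 0 := by
    rw [← hΓR, hΩd, dotProduct_smul, dot_self_cross, smul_zero]
  have hωd_sq : ωd t ⬝ᵥ ωd t = Ωd t ⬝ᵥ Ωd t := by
    rw [hωd, hE₂, dotProduct_self_planar_mulVec (by rwa [transpose_mulVec_apply_two]),
      transpose_mulVec_dotProduct_self (mul_eq_one_comm.mp (hR t).1)]
  have hΩe_Ωd : Ωe t ⬝ᵥ Ωd t = ωe t ⬝ᵥ ωd t := by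
    rw [hΩe, hωd, mulVec_dotProduct_eq_dotProduct_transpose_mulVec,
      mulVec_dotProduct_eq_dotProduct_transpose_mulVec, transpose_transpose]
  refine ⟨_, hasDerivAt_attitude_lyapunov kP Γd (hasDerivAt_pi.2 (hΓdyn t))
    (hasDerivAt_pi.2 (hωedyn t)), ?_, neg_dotProduct_self_add_sqrt_mul_sqrt_lt_zero hkD⟩
  rw [← hΩd, add_dotProduct, dotProduct_damped_rotation_mulVec_self, hΩe_Ωd, ← hωd_sq]
  linarith [neg_dotProduct_le_sqrt_mul_sqrt (ωd t) (ωe t)]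

/-- Lyapunov decrease estimate for the structure-preserving controller. -/
theorem lyapunov_decrease_structure_preserving
    (k kP kD : ℝ) (hkP : 0 < kP) (hkD : kD > 1/4)
    (Γd : Fin 3 → ℝ) (hΓd : Γd ⬝ᵥ Γd = 1)
    (Γ : ℝ → Fin 3 → ℝ) (hΓunit : ∀ t, Γ t ⬝ᵥ Γ t = 1)
    (R : ℝ → Matrix (Fin 3) (Fin 3) ℝ)
    (hR : ∀ t, (R t)ᵀ * R t = 1 ∧ (R t).det = 1)
    (hΓR : ∀ t, Γ t = (R t).mulVec ![0, 0, 1])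
    (ωe : ℝ → Fin 2 → ℝ)
    -- planar components and their lifts
    (E₂ : Matrix (Fin 2) (Fin 3) ℝ) (hE₂ : E₂ = !![1, 0, 0; 0, 1, 0])
    (Ωd : ℝ → Fin 3 → ℝ) (hΩd : ∀ t, Ωd t = kP • (Γ t ⨯₃ Γd))
    (ωd : ℝ → Fin 2 → ℝ) (hωd : ∀ t, ωd t = E₂.mulVec ((R t)ᵀ.mulVec (Ωd t)))
    (Ωe : ℝ → Fin 3 → ℝ) (hΩe : ∀ t, Ωe t = (R t).mulVec (E₂ᵀ.mulVec (ωe t)))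
    -- closed-loop dynamics
    (hΓdyn : ∀ t i, HasDerivAt (fun s => Γ s i) (((Ωd t + Ωe t) ⨯₃ Γ t) i) t)
    (hωedyn : ∀ t i, HasDerivAt (fun s => ωe s i)
      (((!![0, -k; k, 0] - kD • (1 : Matrix (Fin 2) (Fin 2) ℝ)).mulVec (ωe t)) i) t) :
    ∀ t, ∃ v : ℝ,
      HasDerivAt (fun s => kP * (1 - Γd ⬝ᵥ Γ s) + (1/2) * (ωe s ⬝ᵥ ωe s)) v t ∧
      v ≤ -(ωd t ⬝ᵥ ωd t) + Real.sqrt (ωd t ⬝ᵥ ωd t) * Real.sqrt (ωe t ⬝ᵥ ωe t)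
            - kD * (ωe t ⬝ᵥ ωe t) ∧
      (¬(ωd t = 0 ∧ ωe t = 0) →
        -(ωd t ⬝ᵥ ωd t) + Real.sqrt (ωd t ⬝ᵥ ωd t) * Real.sqrt (ωe t ⬝ᵥ ωe t)
            - kD * (ωe t ⬝ᵥ ωe t) < 0) :=
  lyapunov_decrease_structure_preserving_general k kP kD hkD Γd Γ R hR hΓR ωe E₂ hE₂ Ωd hΩd ωd hωd
    Ωe hΩe hΓdyn hωedyn
end

section
/- If a, b, c ∈ ℝ, τ > 0, and k_D > (1 + τ)/4, then −a² + ab − k_D b² + bc − (1/τ)c² < 0 whenever (a,b,c) ≠ (0,0,0). -/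
/-! Completing the square in `a` and in `c` leaves the coefficient `(1 + τ)/4 - kD < 0` on `b²`:
the form is `-(a - b/2)² - (c - τb/2)²/τ - (kD - (1 + τ)/4) b²`. If `b ≠ 0` the last term is
strictly negative; if `b = 0` the form is `-a² - c²/τ`. -/

lemma actuator_form_eq_neg_sum_sq {τ : ℝ} (hτ : τ ≠ 0) (kD a b c : ℝ) :
    -a ^ 2 + a * b - kD * b ^ 2 + b * c - (1 / τ) * c ^ 2 =
      -((a - b / 2) ^ 2 + (c - τ * b / 2) ^ 2 / τ + (kD - (1 + τ) / 4) * b ^ 2) := by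
  field_simp
  ring

theorem quadratic_form_negative_actuator (kD τ : ℝ) (hτ : 0 < τ)
    (hkD : kD > (1 + τ) / 4) (a b c : ℝ) (habc : ¬(a = 0 ∧ b = 0 ∧ c = 0)) :
    -a ^ 2 + a * b - kD * b ^ 2 + b * c - (1 / τ) * c ^ 2 < 0 := by
  rw [actuator_form_eq_neg_sum_sq hτ.ne', neg_lt_zero]
  have hgap : 0 < kD - (1 + τ) / 4 := sub_pos.mpr hkD
  by_cases hb : b = 0
  · subst hb
    obtain ha | hc : a ≠ 0 ∨ c ≠ 0 := by tauto
    all_goals simp only [zero_div, sub_zero, mul_zero, zero_pow two_ne_zero, add_zero]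
    all_goals positivity
  · positivity
end
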